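/- Let A, B be bounded linear operators on a Hilbert space H. Then R(A+B) = R(A) + R(B) if and only if R(A) ∩ R(B) ⊆ R(A+B) and H = A^{-1}(R(B)) + B^{-1}(R(A)). -/

import Mathlib

/-!
`R(A + B) ⊆ R(A) + R(B)` always holds, so additivity amounts to `R(A) ⊆ R(A + B)` and
`R(B) ⊆ R(A + B)`, i.e. to `A⁻¹(R(A + B)) = H = B⁻¹(R(A + B))`. If `A x = (A + B) y`, then
`x = (x - y) + y` with `A (x - y) = B y`, so `A⁻¹(R(A + B)) ⊆ A⁻¹(R(B)) + B⁻¹(R(A))`. Conversely,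
when `R(A) ∩ R(B) ⊆ R(A + B)`, both `A` and `B` map `A⁻¹(R(B))` and `B⁻¹(R(A))` into `R(A + B)`,
since `A v = (A + B) v - B v`.
-/

namespace LinearMap

variable {R M N : Type*} [Ring R] [AddCommGroup M] [AddCommGroup N] [Module R M] [Module R N]
  {f g : M →ₗ[R] N}

theorem comap_range_add_le_sup_comap_range :
    (range (f + g)).comap f ≤ (range g).comap f ⊔ (range f).comap g := by
  rintro x ⟨y, hy⟩
  have hfg : f (x - y) = g y := by
    rw [map_sub, ← hy, add_apply]
    abel
  exact Submodule.mem_sup.2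
    ⟨x - y, ⟨y, hfg.symm⟩, y, ⟨x - y, hfg⟩, sub_add_cancel x y⟩

theorem sup_comap_range_le_comap_range_add (h : range f ⊓ range g ≤ range (f + g)) :
    (range g).comap f ⊔ (range f).comap g ≤ (range (f + g)).comap f := by
  refine sup_le (fun u hu => h ⟨mem_range_self f u, hu⟩) fun v hv => ?_
  have hgv : g v ∈ range (f + g) := h ⟨hv, mem_range_self g v⟩
  have hfv : f v = (f + g) v - g v := by
    rw [add_apply, add_sub_cancel_right]
  rw [Submodule.mem_comap, hfv]
  exact sub_mem (mem_range_self _ v) hgv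

theorem range_le_range_add_iff (h : range f ⊓ range g ≤ range (f + g)) :
    range f ≤ range (f + g) ↔ (range g).comap f ⊔ (range f).comap g = ⊤ := by
  rw [range_le_iff_comap]
  exact ⟨fun htop => le_antisymm le_top (htop ▸ comap_range_add_le_sup_comap_range),
    fun htop => le_antisymm le_top (htop ▸ sup_comap_range_le_comap_range_add h)⟩

theorem range_add_eq_sup_iff :
    range (f + g) = range f ⊔ range g ↔
      range f ⊓ range g ≤ range (f + g) ∧ (range g).comap f ⊔ (range f).comap g = ⊤ := by
  rw [le_antisymm_iff, and_iff_right (range_add_le f g), sup_le_iff]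
  constructor
  · rintro ⟨hf, hg⟩
    have h : range f ⊓ range g ≤ range (f + g) := inf_le_left.trans hf
    exact ⟨h, (range_le_range_add_iff h).1 hf⟩
  · rintro ⟨h, htop⟩
    have h' : range g ⊓ range f ≤ range (g + f) := by rwa [inf_comm, add_comm]
    have hg := (range_le_range_add_iff h').2 (by rwa [sup_comm])
    rw [add_comm] at hg
    exact ⟨(range_le_range_add_iff h).2 htop, hg⟩

end LinearMap

open ContinuousLinearMap

variable {H : Type*} [NormedAddCommGroup H] [InnerProductSpace ℂ H] [CompleteSpace H]

theorem range_additivity_iff_preimages (A B : H →L[ℂ] H) :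
    LinearMap.range ((A + B : H →L[ℂ] H) : H →ₗ[ℂ] H) = LinearMap.range (A : H →ₗ[ℂ] H) ⊔ LinearMap.range (B : H →ₗ[ℂ] H) ↔
      (LinearMap.range (A : H →ₗ[ℂ] H) ⊓ LinearMap.range (B : H →ₗ[ℂ] H) ≤ LinearMap.range ((A + B : H →L[ℂ] H) : H →ₗ[ℂ] H) ∧
        Submodule.comap (A : H →ₗ[ℂ] H) (LinearMap.range (B : H →ₗ[ℂ] H)) ⊔
          Submodule.comap (B : H →ₗ[ℂ] H) (LinearMap.range (A : H →ₗ[ℂ] H)) = ⊤) := by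
  rw [toLinearMap_add]
  exact LinearMap.range_add_eq_sup_iff
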